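/- Let m : ℝ → ℝ be an even, positive, continuous function that is non-increasing on [0,∞), and assume that ∫₁^∞ (log⁻ m(t))/t² dt < ∞. Then the double integral ∫₁^∞ ( ∫₀^π sin θ/(t·sin θ + m(t·cos θ))² dθ ) dt is finite. -/

import Mathlib

open MeasureTheory

/-- `log⁻ t = max (−log t) 0`. -/
noncomputable def negLog (t : ℝ) : ℝ := max (-Real.log t) 0

open Real Set

/-!
For `t ≥ 1`, evenness and monotonicity give `m (t cos θ) ≥ m t =: a`, so the inner integrand is
at most `1 / (t (t sin θ + a))`. Jordan's inequality `sin θ ≥ 2θ/π`, applied on both halves of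
`[0, π]`, bounds its `θ`-integral by `π log (1 + t/a) / t²`, and
`log (1 + t/a) ≤ log (1 + t) + log⁻ a`. The first term is integrable over `t ≥ 1` because
`log (1 + t) = O(√t)`; the second is the hypothesis on `m`.
-/

theorem Function.Even.apply_le_apply_of_abs_le {α β : Type*} [AddCommGroup α] [LinearOrder α]
    [IsOrderedAddMonoid α] [Preorder β] {m : α → β} (h_even : Function.Even m)
    (h_mono : AntitoneOn m (Ici 0)) {x y : α} (h : |x| ≤ |y|) : m y ≤ m x := by
  have apply_abs : ∀ z, m |z| = m z := fun z => by
    rcases abs_choice z with hz | hz <;> rw [hz]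
    exact h_even z
  rw [← apply_abs x, ← apply_abs y]
  exact h_mono (abs_nonneg x) (abs_nonneg y) h

theorem div_mul_add_sq_le {x t a b : ℝ} (hx : 0 ≤ x) (ht : 0 < t) (ha : 0 < a) (hab : a ≤ b) :
    x / (t * x + b) ^ 2 ≤ (t * x + a)⁻¹ / t := by
  calc x / (t * x + b) ^ 2 ≤ x / (t * x + a) ^ 2 := by gcongr
    _ ≤ (t * x + a) / t / (t * x + a) ^ 2 := by
      gcongr
      rw [le_div_iff₀ ht]
      linarith
    _ = (t * x + a)⁻¹ / t := by field_simp

theorem log_add_div_le_log_one_add_add_negLog {t a : ℝ} (ht : 0 ≤ t) (ha : 0 < a) :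
    log ((t + a) / a) ≤ log (1 + t) + negLog a := by
  rcases le_or_gt a 1 with ha1 | ha1
  · have : -log a ≤ negLog a := le_max_left _ _
    calc log ((t + a) / a) ≤ log ((1 + t) / a) := by gcongr log (?_ / _); linarith
      _ = log (1 + t) - log a := log_div (by positivity) ha.ne'
      _ ≤ log (1 + t) + negLog a := by linarith
  · calc log ((t + a) / a) ≤ log (1 + t) := by
          gcongr
          rw [div_le_iff₀ ha]
          nlinarith
      _ ≤ log (1 + t) + negLog a := le_add_of_nonneg_right (le_max_right _ _)

theorem integral_inv_mul_add {c d L : ℝ} (hc : 0 < c) (hd : 0 < d) (hL : 0 ≤ L) :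
    ∫ x in (0 : ℝ)..L, (c * x + d)⁻¹ = log ((c * L + d) / d) / c := by
  rw [intervalIntegral.integral_comp_mul_add (fun x => x⁻¹) hc.ne', mul_zero, zero_add,
    integral_inv (notMem_uIcc_of_lt hd (by positivity)), smul_eq_mul, inv_mul_eq_div]

theorem integral_inv_mul_sin_add_le {t a : ℝ} (ht : 0 < t) (ha : 0 < a) :
    ∫ θ in (0 : ℝ)..π, (t * sin θ + a)⁻¹ ≤ π / t * log ((t + a) / a) := by
  set f : ℝ → ℝ := fun θ => (t * sin θ + a)⁻¹ with hf
  have hcont : ContinuousOn f (Icc 0 π) := by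
    refine ((continuous_const.mul continuous_sin).add continuous_const).continuousOn.inv₀ ?_
    intro θ hθ
    have := sin_nonneg_of_nonneg_of_le_pi hθ.1 hθ.2
    exact (add_pos_of_nonneg_of_pos (mul_nonneg ht.le this) ha).ne'
  have hint : ∀ x ∈ Icc 0 π, ∀ y ∈ Icc 0 π, IntervalIntegrable f volume x y :=
    fun x hx y hy => (hcont.mono (uIcc_subset_Icc hx hy)).intervalIntegrable
  have hπ := pi_pos
  have h0 : (0 : ℝ) ∈ Icc 0 π := left_mem_Icc.2 hπ.le
  have hmid : π / 2 ∈ Icc 0 π := ⟨by positivity, by linarith⟩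
  have hsymm : ∫ θ in π / 2..π, f θ = ∫ θ in 0..π / 2, f θ := by
    have := intervalIntegral.integral_comp_sub_left f π (a := 0) (b := π / 2)
    simp only [hf, sin_pi_sub, sub_zero, sub_half] at this
    exact this.symm
  have hmodel : IntervalIntegrable (fun θ => (2 / π * t * θ + a)⁻¹) volume 0 (π / 2) := by
    refine (ContinuousOn.inv₀ (by fun_prop) fun θ hθ => ?_).intervalIntegrable
    rw [uIcc_of_le (by positivity)] at hθ
    exact (add_pos_of_nonneg_of_pos (mul_nonneg (by positivity) hθ.1) ha).ne'
  calc ∫ θ in 0..π, f θ = (∫ θ in 0..π / 2, f θ) + ∫ θ in π / 2..π, f θ :=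
        (intervalIntegral.integral_add_adjacent_intervals (hint _ h0 _ hmid)
          (hint _ hmid _ (right_mem_Icc.2 hπ.le))).symm
    _ = 2 * ∫ θ in 0..π / 2, f θ := by rw [hsymm]; ring
    _ ≤ 2 * ∫ θ in 0..π / 2, (2 / π * t * θ + a)⁻¹ := by
      gcongr
      refine intervalIntegral.integral_mono_on (by positivity) (hint _ h0 _ hmid) hmodel
        fun θ hθ => ?_
      have hjordan := mul_le_sin hθ.1 hθ.2
      have : 0 ≤ 2 / π * θ := mul_nonneg (by positivity) hθ.1
      refine inv_anti₀ (by nlinarith) ?_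
      nlinarith
    _ = π / t * log ((t + a) / a) := by
      rw [integral_inv_mul_add (by positivity) ha (by positivity)]
      field_simp

theorem setLIntegral_Icc_ofReal_eq_intervalIntegral {f : ℝ → ℝ} {a b : ℝ} (hab : a ≤ b)
    (hf : ContinuousOn f (Icc a b)) (hf_nonneg : ∀ x ∈ Icc a b, 0 ≤ f x) :
    ∫⁻ x in Icc a b, ENNReal.ofReal (f x) = ENNReal.ofReal (∫ x in a..b, f x) := by
  rw [intervalIntegral.integral_of_le hab, ← integral_Icc_eq_integral_Ioc,
    ofReal_integral_eq_lintegral_ofReal (hf.integrableOn_Icc)]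
  filter_upwards [ae_restrict_mem measurableSet_Icc] with x hx using hf_nonneg x hx

theorem setLIntegral_sin_div_mul_sin_add_sq_le {m : ℝ → ℝ}
    (h_even : Function.Even m) (h_mono : AntitoneOn m (Ici 0)) {t : ℝ} (ht : 1 ≤ t)
    (ha : 0 < m t) :
    ∫⁻ θ in Icc 0 π, ENNReal.ofReal (sin θ / (t * sin θ + m (t * cos θ)) ^ 2) ≤
      ENNReal.ofReal π *
        (ENNReal.ofReal (log (1 + t) / t ^ 2) + ENNReal.ofReal (negLog (m t) / t ^ 2)) := by
  have ht0 : 0 < t := by linarith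
  set a := m t
  have hsin : ∀ θ ∈ Icc 0 π, 0 ≤ sin θ := fun θ hθ => sin_nonneg_of_nonneg_of_le_pi hθ.1 hθ.2
  have hcont : ContinuousOn (fun θ => (t * sin θ + a)⁻¹ / t) (Icc 0 π) := by
    refine (ContinuousOn.inv₀ (by fun_prop) fun θ hθ => ?_).div_const t
    have := hsin θ hθ
    positivity
  calc ∫⁻ θ in Icc 0 π, ENNReal.ofReal (sin θ / (t * sin θ + m (t * cos θ)) ^ 2)
      ≤ ∫⁻ θ in Icc 0 π, ENNReal.ofReal ((t * sin θ + a)⁻¹ / t) := by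
        refine setLIntegral_mono' measurableSet_Icc fun θ hθ => ENNReal.ofReal_le_ofReal ?_
        refine div_mul_add_sq_le (hsin θ hθ) ht0 ha
          (h_even.apply_le_apply_of_abs_le h_mono ?_)
        rw [abs_mul]
        exact mul_le_of_le_one_right (abs_nonneg t) (abs_cos_le_one θ)
    _ = ENNReal.ofReal ((∫ θ in 0..π, (t * sin θ + a)⁻¹) / t) := by
        rw [setLIntegral_Icc_ofReal_eq_intervalIntegral pi_pos.le hcont fun θ hθ => ?_,
          intervalIntegral.integral_div]
        have := hsin θ hθ
        positivity
    _ ≤ ENNReal.ofReal (π * ((log (1 + t) + negLog a) / t ^ 2)) := by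
        refine ENNReal.ofReal_le_ofReal ?_
        calc (∫ θ in 0..π, (t * sin θ + a)⁻¹) / t ≤ π / t * log ((t + a) / a) / t := by
              gcongr
              exact integral_inv_mul_sin_add_le ht0 ha
          _ = π * (log ((t + a) / a) / t ^ 2) := by ring
          _ ≤ π * ((log (1 + t) + negLog a) / t ^ 2) := by
              gcongr
              exact log_add_div_le_log_one_add_add_negLog ht0.le ha
    _ ≤ _ := by
        rw [ENNReal.ofReal_mul pi_pos.le, add_div]
        gcongr
        exact ENNReal.ofReal_add_le

theorem log_one_add_div_sq_le_rpow {t : ℝ} (ht : 1 ≤ t) :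
    log (1 + t) / t ^ 2 ≤ 4 * t ^ (-3 / 2 : ℝ) := by
  have ht0 : 0 < t := by linarith
  have hlog : log (1 + t) ≤ 4 * t ^ (1 / 2 : ℝ) := by
    calc log (1 + t) ≤ (1 + t) ^ (1 / 2 : ℝ) / (1 / 2) := log_le_rpow_div (by linarith) (by norm_num)
      _ ≤ (4 * t) ^ (1 / 2 : ℝ) / (1 / 2) := by gcongr; linarith
      _ = 4 * t ^ (1 / 2 : ℝ) := by
        rw [mul_rpow (by norm_num) ht0.le, show (4 : ℝ) = 2 ^ (2 : ℝ) by norm_num,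
          ← rpow_mul (by norm_num)]
        norm_num
        ring
  calc log (1 + t) / t ^ 2 ≤ 4 * t ^ (1 / 2 : ℝ) / t ^ 2 := by gcongr
    _ = 4 * t ^ (-3 / 2 : ℝ) := by
      rw [mul_div_assoc, ← rpow_natCast, ← rpow_sub ht0]
      norm_num

theorem lintegral_log_one_add_div_sq_ne_top :
    ∫⁻ t in Ici (1 : ℝ), ENNReal.ofReal (log (1 + t) / t ^ 2) ≠ ⊤ := by
  have h_rpow : IntegrableOn (fun t : ℝ => 4 * t ^ (-3 / 2 : ℝ)) (Ici 1) :=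
    ((integrableOn_Ici_iff_integrableOn_Ioi).2
      (integrableOn_Ioi_rpow_of_lt (by norm_num) one_pos)).const_mul 4
  refine ne_top_of_le_ne_top h_rpow.setLIntegral_lt_top.ne ?_
  exact setLIntegral_mono' measurableSet_Ici fun t ht =>
    ENNReal.ofReal_le_ofReal (log_one_add_div_sq_le_rpow ht)

theorem statement10_general (m : ℝ → ℝ)
    (h_even : ∀ x, m (-x) = m x) (h_pos : ∀ x, 0 < m x)
    (h_mono : AntitoneOn m (Set.Ici 0))
    (h_int : ∫⁻ t in Set.Ici (1 : ℝ), ENNReal.ofReal (negLog (m t) / t ^ 2) ≠ ⊤) :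
    (∫⁻ t in Set.Ici (1 : ℝ), ∫⁻ θ in Set.Icc (0 : ℝ) Real.pi,
      ENNReal.ofReal (Real.sin θ / (t * Real.sin θ + m (t * Real.cos θ)) ^ 2)) ≠ ⊤ := by
  refine ne_top_of_le_ne_top ?_ (setLIntegral_mono' measurableSet_Ici fun t ht =>
    setLIntegral_sin_div_mul_sin_add_sq_le h_even h_mono ht (h_pos t))
  rw [lintegral_const_mul' _ _ ENNReal.ofReal_ne_top, lintegral_add_left (by fun_prop)]
  exact ENNReal.mul_ne_top ENNReal.ofReal_ne_top
    (ENNReal.add_ne_top.2 ⟨lintegral_log_one_add_div_sq_ne_top, h_int⟩)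

/-- If `m` is even, positive, continuous, non-increasing on `[0, ∞)` and its logarithmic
integral converges, then `∫₁^∞ ∫₀^π sin θ/(t·sin θ + m(t·cos θ))² dθ dt < ∞`. -/
theorem statement10 (m : ℝ → ℝ)
    (h_even : ∀ x, m (-x) = m x) (h_pos : ∀ x, 0 < m x)
    (h_cont : Continuous m) (h_mono : AntitoneOn m (Set.Ici 0))
    (h_int : ∫⁻ t in Set.Ici (1 : ℝ), ENNReal.ofReal (negLog (m t) / t ^ 2) ≠ ⊤) :
    (∫⁻ t in Set.Ici (1 : ℝ), ∫⁻ θ in Set.Icc (0 : ℝ) Real.pi,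
      ENNReal.ofReal (Real.sin θ / (t * Real.sin θ + m (t * Real.cos θ)) ^ 2)) ≠ ⊤ :=
  statement10_general m h_even h_pos h_mono h_int
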